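/- arXiv:2505.21818 — 2 statements merged into one kernel-verified Lean document; each statement's English description precedes it below -/
import Mathlib

section
/- Consider the augmented system Ṅ = F(N) + S(N)μ with behavior policy μ. If (V^{(k+1)}, μ^{(k+1)}) satisfies the policy-evaluation equation NᵀQ̂N + U(μ^{(k)}) + (∇V^{(k+1)})ᵀ(F(N) + S(N)μ^{(k)}) = 0 along with the policy-improvement relation μ^{(k+1)} = −λ tanh(D^{(k+1)}), D^{(k+1)} = (1/(2λ))R⁻¹Sᵀ∇V^{(k+1)}, then along any trajectory of Ṅ = F(N) + S(N)μ, d/dt V^{(k+1)}(N(t)) = −NᵀQ̂N − U(μ^{(k)}) − 2λ (D^{(k+1)})ᵀ R (μ^{(k)} − μ). -/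
/-- The inverse hyperbolic tangent: artanh x = (1/2) * log ((1+x)/(1-x)). -/
noncomputable def artanh (x : ℝ) : ℝ := (1 / 2) * Real.log ((1 + x) / (1 - x))



open Matrix

lemma dot_mulVec_eq_sum (A : Matrix (Fin 8) (Fin 2) ℝ) (v : Fin 8 → ℝ) (m : Fin 2 → ℝ) :
    v ⬝ᵥ A.mulVec m = ∑ i, Aᵀ.mulVec v i * m i := by
  simp only [dotProduct, mulVec, transpose_apply, Finset.mul_sum, Finset.sum_mul]
  rw [Finset.sum_comm]
  congr 1; ext i; congr 1; ext j; ring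

/-- Along any trajectory of the augmented system `Ṅ = F(N) + S(N)μ` driven by a
behavior policy `μ`, if `(V^{(k+1)}, μ^{(k+1)})` satisfies the policy-evaluation
Bellman equation and the policy-improvement relation, then
`d/dt V^{(k+1)}(N(t)) = −NᵀQ̂N − U(μ^{(k)}) − 2λ (D^{(k+1)})ᵀ R (μ^{(k)} − μ)`. -/
theorem value_derivative_along_behavior_policy
    (lam : ℝ) (hlam : 0 < lam) (γ : Fin 2 → ℝ) (hγ : ∀ i, 0 < γ i)
    (Qhat : Matrix (Fin 8) (Fin 8) ℝ) (hQ : Qhat.PosSemidef)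
    (F : (Fin 8 → ℝ) → Fin 8 → ℝ)
    (S : (Fin 8 → ℝ) → Matrix (Fin 8) (Fin 2) ℝ)
    (U : (Fin 2 → ℝ) → ℝ)
    (hU : ∀ m : Fin 2 → ℝ,
      U m = 2 * ∑ i, γ i * ∫ υ in (0:ℝ)..(m i), lam * artanh (υ / lam))
    (V : (Fin 8 → ℝ) → ℝ) (gradV : (Fin 8 → ℝ) → Fin 8 → ℝ)
    (μk : (Fin 8 → ℝ) → Fin 2 → ℝ)   -- policy being evaluated
    (μk1 : (Fin 8 → ℝ) → Fin 2 → ℝ)  -- improved policy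
    (D : (Fin 8 → ℝ) → Fin 2 → ℝ)
    (hD : ∀ x i, D x i = 1 / (2 * lam) * (γ i)⁻¹ * ((S x)ᵀ.mulVec (gradV x) i))
    (himp : ∀ x i, μk1 x i = -lam * Real.tanh (D x i))
    (heval : ∀ x : Fin 8 → ℝ,
      x ⬝ᵥ Qhat.mulVec x + U (μk x)
        + gradV x ⬝ᵥ (F x + (S x).mulVec (μk x)) = 0)
    (N : ℝ → Fin 8 → ℝ) (μ : ℝ → Fin 2 → ℝ)
    (htraj : ∀ t, HasDerivAt N (F (N t) + (S (N t)).mulVec (μ t)) t)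
    (hchain : ∀ t, HasDerivAt (fun s => V (N s))
      (gradV (N t) ⬝ᵥ (F (N t) + (S (N t)).mulVec (μ t))) t) :
    ∀ t, HasDerivAt (fun s => V (N s))
      (-(N t ⬝ᵥ Qhat.mulVec (N t)) - U (μk (N t))
        - 2 * lam * ∑ i, D (N t) i * γ i * (μk (N t) i - μ t i)) t := by
  intro t
  have h := hchain t
  set x := N t
  have hST : ∀ i, (S x)ᵀ.mulVec (gradV x) i = 2 * lam * γ i * D x i := by
    intro i
    rw [hD x i]
    field_simp [hlam.ne', (hγ i).ne']
  have hkey : gradV x ⬝ᵥ (F x + (S x).mulVec (μ t))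
      = -(x ⬝ᵥ Qhat.mulVec x) - U (μk x)
        - 2 * lam * ∑ i, D x i * γ i * (μk x i - μ t i) := by
    have he := heval x
    have h1 : gradV x ⬝ᵥ (F x + (S x).mulVec (μk x))
        = gradV x ⬝ᵥ F x + ∑ i, (S x)ᵀ.mulVec (gradV x) i * μk x i := by
      rw [dotProduct_add, dot_mulVec_eq_sum]
    have h2 : gradV x ⬝ᵥ (F x + (S x).mulVec (μ t))
        = gradV x ⬝ᵥ F x + ∑ i, (S x)ᵀ.mulVec (gradV x) i * μ t i := by
      rw [dotProduct_add, dot_mulVec_eq_sum]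
    rw [h1] at he
    rw [h2]
    simp only [hST] at he ⊢
    have hsum : ∑ i, 2 * lam * γ i * D x i * μ t i
        = (∑ i, 2 * lam * γ i * D x i * μk x i)
          - 2 * lam * ∑ i, D x i * γ i * (μk x i - μ t i) := by
      rw [Finset.mul_sum, ← Finset.sum_sub_distrib]
      congr 1; ext i; ring
    rw [hsum]
    linarith
  rw [hkey] at h
  exact h
end

section
/- (Equivalence, direction 2) Let g : [0,∞) → ℝ be continuous. If V : ℝ⁸ → ℝ is C¹, N(·) solves Ṅ = F(N) + S(N)μ, and for every t and every Δt > 0, V(N(t+Δt)) − V(N(t)) = −∫ₜ^{t+Δt} g(τ) dτ, then d/dt V(N(t)) = −g(t) for all t; consequently, if g(t) = N(t)ᵀQ̂N(t) + U(μ^{(k)}) + 2λ(D^{(k+1)})ᵀR(μ^{(k)} − μ) and D^{(k+1)} = (1/(2λ))R⁻¹Sᵀ∇V, then (∇V)ᵀ(F + Sμ^{(k)}) + NᵀQ̂N + U(μ^{(k)}) = 0, i.e., V satisfies the model-based policy-evaluation Bellman equation. -/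
open Matrix

/-- (Equivalence, direction 2) If the IRL integral relation
`V(N(t+Δt)) − V(N(t)) = −∫ₜ^{t+Δt} g(τ)dτ` holds for every `t` and `Δt > 0`
with `g` continuous, then `d/dt V(N(t)) = −g(t)`; consequently, when
`g = NᵀQ̂N + U(μ^{(k)}) + 2λ(D^{(k+1)})ᵀR(μ^{(k)} − μ)` with
`(∇V)ᵀS = 2λ(D^{(k+1)})ᵀR` and the chain rule along `Ṅ = F + Sμ`, the
model-based policy-evaluation Bellman equation holds. -/
theorem policy_evaluation_from_irl_bellman
    (lam : ℝ) (hlam : 0 < lam) (γ : Fin 2 → ℝ) (hγ : ∀ i, 0 < γ i)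
    (Qhat : Matrix (Fin 8) (Fin 8) ℝ)
    (U : (Fin 2 → ℝ) → ℝ)
    (F : (Fin 8 → ℝ) → Fin 8 → ℝ)
    (S : (Fin 8 → ℝ) → Matrix (Fin 8) (Fin 2) ℝ)
    (V : (Fin 8 → ℝ) → ℝ) (gradV : (Fin 8 → ℝ) → Fin 8 → ℝ)
    (D : (Fin 8 → ℝ) → Fin 2 → ℝ)
    (hD : ∀ x i, D x i = 1 / (2 * lam) * (γ i)⁻¹ * ((S x)ᵀ.mulVec (gradV x) i))
    (N : ℝ → Fin 8 → ℝ) (μk : (Fin 8 → ℝ) → Fin 2 → ℝ) (μ : ℝ → Fin 2 → ℝ)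
    (htraj : ∀ t, HasDerivAt N (F (N t) + (S (N t)).mulVec (μ t)) t)
    (hchain : ∀ t, HasDerivAt (fun s => V (N s))
      (gradV (N t) ⬝ᵥ (F (N t) + (S (N t)).mulVec (μ t))) t)
    (g : ℝ → ℝ) (hgc : Continuous g)
    (hg : ∀ τ, g τ = N τ ⬝ᵥ Qhat.mulVec (N τ) + U (μk (N τ))
      + 2 * lam * ∑ i, D (N τ) i * γ i * (μk (N τ) i - μ τ i))
    (hIRL : ∀ (t Δt : ℝ), 0 < Δt →
      V (N (t + Δt)) - V (N t) = -(∫ τ in t..(t + Δt), g τ)) :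
    (∀ t, HasDerivAt (fun s => V (N s)) (-(g t)) t) ∧
    (∀ t, gradV (N t) ⬝ᵥ (F (N t) + (S (N t)).mulVec (μk (N t)))
      + N t ⬝ᵥ Qhat.mulVec (N t) + U (μk (N t)) = 0) := by
  set G : ℝ → ℝ := fun s => ∫ τ in (0:ℝ)..s, g τ with hGdef
  have hGd : ∀ t, HasDerivAt G (g t) t := fun t =>
    (hgc.integral_hasStrictDerivAt 0 t).hasDerivAt
  have hsplit : ∀ a b : ℝ, (∫ τ in a..b, g τ) = G b - G a := by
    intro a b
    have h := intervalIntegral.integral_add_adjacent_intervals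
      (hgc.intervalIntegrable (μ := MeasureTheory.volume) 0 a) (hgc.intervalIntegrable (μ := MeasureTheory.volume) a b)
    simp only [hGdef]
    linarith
  have hconst : ∀ s t : ℝ, V (N s) + G s = V (N t) + G t := by
    have key : ∀ a b : ℝ, a < b → V (N b) + G b = V (N a) + G a := by
      intro a b hab
      have h := hIRL a (b - a) (by linarith)
      rw [show a + (b - a) = b by ring, hsplit a b] at h
      linarith
    intro s t
    rcases lt_trichotomy s t with h | h | h
    · exact (key s t h).symm
    · rw [h]
    · exact key t s h
  have hderiv : ∀ t, HasDerivAt (fun s => V (N s)) (-(g t)) t := by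
    intro t
    have h1 : HasDerivAt (fun s => V (N t) + G t - G s) (-(g t)) t :=
      (hGd t).const_sub _
    refine h1.congr_of_eventuallyEq (Filter.Eventually.of_forall fun s => ?_)
    have := hconst s t
    dsimp only
    linarith
  refine ⟨hderiv, fun t => ?_⟩
  have huniq : gradV (N t) ⬝ᵥ (F (N t) + (S (N t)).mulVec (μ t)) = -(g t) :=
    (hchain t).unique (hderiv t)
  -- rewrite the λ-sum
  have hsum : 2 * lam * ∑ i, D (N t) i * γ i * (μk (N t) i - μ t i)
      = gradV (N t) ⬝ᵥ (S (N t)).mulVec (μk (N t))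
        - gradV (N t) ⬝ᵥ (S (N t)).mulVec (μ t) := by
    have hterm : ∀ i, 2 * lam * (D (N t) i * γ i)
        = (S (N t))ᵀ.mulVec (gradV (N t)) i := by
      intro i
      have h1 := hlam.ne'
      have h2 := (hγ i).ne'
      rw [hD]
      field_simp
    have h1 : 2 * lam * ∑ i, D (N t) i * γ i * (μk (N t) i - μ t i)
        = ∑ i, (S (N t))ᵀ.mulVec (gradV (N t)) i * (μk (N t) i - μ t i) := by
      rw [Finset.mul_sum]
      refine Finset.sum_congr rfl fun i _ => ?_
      rw [← hterm i]; ring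
    rw [h1]
    have h2 : ∀ v : Fin 2 → ℝ, gradV (N t) ⬝ᵥ (S (N t)).mulVec v
        = (S (N t))ᵀ.mulVec (gradV (N t)) ⬝ᵥ v := by
      intro v
      rw [Matrix.dotProduct_mulVec, Matrix.mulVec_transpose]
    rw [h2, h2, dotProduct, dotProduct, ← Finset.sum_sub_distrib]
    refine Finset.sum_congr rfl fun i _ => ?_
    ring
  have hexp : ∀ v : Fin 2 → ℝ, gradV (N t) ⬝ᵥ (F (N t) + (S (N t)).mulVec v)
      = gradV (N t) ⬝ᵥ F (N t) + gradV (N t) ⬝ᵥ (S (N t)).mulVec v := fun v =>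
    dotProduct_add _ _ _
  rw [hexp] at huniq ⊢
  rw [hg t, hsum] at huniq
  linarith
end
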